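/- arXiv:1905.12057 — 7 statements merged into one kernel-verified Lean document; each statement's English description precedes it below -/
import Mathlib

section
/- Let (a_n) be defined by a_1 = 1 and a_n = n - \sum_{j=1}^{n-1} a_{n-j} F_{2j+1} for n \geq 2, where F_j is the Fibonacci sequence (F_1 = F_2 = 1, F_{n} = F_{n-1} + F_{n-2}). Then a_n = 1 - n(n-1)/2 for all n \geq 1. -/
theorem stmt_0 (a : ℕ → ℤ) (h1 : a 1 = 1)
    (hrec : ∀ n : ℕ, 2 ≤ n →
      a n = (n : ℤ) - ∑ j ∈ Finset.Icc 1 (n - 1), a (n - j) * (Nat.fib (2 * j + 1) : ℤ)) :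
    ∀ n : ℕ, 1 ≤ n → a n = 1 - ((n : ℤ) * ((n : ℤ) - 1)) / 2 := by
  set S : ℕ → ℤ := fun m => ∑ i ∈ Finset.range m, a (m - i) * (Nat.fib (2 * i + 3) : ℤ) with hSdef
  have ha : ∀ m : ℕ, a (m + 2) = (m + 2 : ℤ) - S (m + 1) := by
    intro m
    have h := hrec (m + 2) (by omega)
    rw [h]
    have : (m + 2 - 1) = m + 1 := by omega
    rw [this, ← Finset.Ico_add_one_right_eq_Icc, Finset.sum_Ico_eq_sum_range]
    have : (m + 1 + 1 - 1) = m + 1 := by omega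
    rw [this]
    simp only [hSdef]
    have hsum : (∑ i ∈ Finset.range (m+1), a (m + 2 - (1 + i)) * (Nat.fib (2 * (1 + i) + 1) : ℤ))
        = ∑ i ∈ Finset.range (m+1), a (m + 1 - i) * (Nat.fib (2 * i + 3) : ℤ) := by
      apply Finset.sum_congr rfl
      intro i hi
      have e1 : m + 2 - (1 + i) = m + 1 - i := by omega
      have e2 : 2 * (1 + i) + 1 = 2 * i + 3 := by omega
      rw [e1, e2]
    rw [hsum]
    push_cast
    ring
  have hS : ∀ m : ℕ, S (m + 2) = 2 * a (m + 2) + 3 * S (m + 1) - a (m + 1) - S m := by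
    intro m
    have fib5 : ∀ i : ℕ, (Nat.fib (2 * i + 5) : ℤ) = 3 * Nat.fib (2 * i + 3) - Nat.fib (2 * i + 1) := by
      intro i
      have h1 : Nat.fib (2 * i + 5) = Nat.fib (2 * i + 4) + Nat.fib (2 * i + 3) := by
        rw [show 2*i+5 = (2*i+3)+2 by ring, Nat.fib_add_two]; ring_nf
      have h2 : Nat.fib (2 * i + 4) = Nat.fib (2 * i + 3) + Nat.fib (2 * i + 2) := by
        rw [show 2*i+4 = (2*i+2)+2 by ring, Nat.fib_add_two]; ring_nf
      have h3 : Nat.fib (2 * i + 3) = Nat.fib (2 * i + 2) + Nat.fib (2 * i + 1) := by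
        rw [show 2*i+3 = (2*i+1)+2 by ring, Nat.fib_add_two]; ring_nf
      push_cast [h1, h2]
      have : (Nat.fib (2*i+2) : ℤ) = Nat.fib (2*i+3) - Nat.fib (2*i+1) := by
        rw [h3]; push_cast; ring
      rw [this]; ring
    simp only [hSdef]
    rw [Finset.sum_range_succ' (fun i => a (m + 2 - i) * (Nat.fib (2 * i + 3) : ℤ)) (m+1)]
    have step1 : ∀ i ∈ Finset.range (m+1),
        a (m + 2 - (i + 1)) * (Nat.fib (2 * (i+1) + 3) : ℤ)
          = 3 * (a (m + 1 - i) * (Nat.fib (2 * i + 3) : ℤ))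
            - a (m + 1 - i) * (Nat.fib (2 * i + 1) : ℤ) := by
      intro i hi
      have e1 : m + 2 - (i + 1) = m + 1 - i := by omega
      have e2 : 2 * (i + 1) + 3 = 2 * i + 5 := by omega
      rw [e1, e2, fib5]; ring
    rw [Finset.sum_congr rfl step1, Finset.sum_sub_distrib, ← Finset.mul_sum]
    have peel : ∑ i ∈ Finset.range (m+1), a (m + 1 - i) * (Nat.fib (2 * i + 1) : ℤ)
        = (∑ i ∈ Finset.range m, a (m - i) * (Nat.fib (2 * i + 3) : ℤ)) + a (m + 1) := by
      rw [Finset.sum_range_succ' (fun i => a (m + 1 - i) * (Nat.fib (2 * i + 1) : ℤ)) m]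
      simp only [Nat.sub_zero, Nat.mul_zero, Nat.zero_add, Nat.fib_one]
      congr 1
      · apply Finset.sum_congr rfl
        intro i hi
        have e1 : m + 1 - (i + 1) = m - i := by omega
        have e2 : 2 * (i + 1) + 1 = 2 * i + 3 := by omega
        rw [e1, e2]
      · simp
    rw [peel]
    simp only [Nat.sub_zero, Nat.mul_zero, Nat.zero_add]
    have h3 : Nat.fib 3 = 2 := by decide
    rw [h3]
    push_cast
    ring
  have hrec4 : ∀ m : ℕ, a (m + 4) = a (m + 3) - ((m : ℤ) + 3) := by
    intro m
    have h4 := ha (m + 2)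
    have h3 := ha (m + 1)
    have h2 := ha m
    have hs := hS (m + 1)
    rw [show m + 2 + 2 = m + 4 from by omega, show m + 2 + 1 = m + 3 from by omega] at h4
    rw [show m + 1 + 2 = m + 3 from by omega, show m + 1 + 1 = m + 2 from by omega] at h3 hs
    push_cast at h4 h3 h2 hs
    linarith
  have ha2 : a 2 = 0 := by
    have h := ha 0
    simp only [hSdef] at h
    norm_num [Finset.sum_range_one, h1] at h
    linarith
  have ha3 : a 3 = -2 := by
    have h := ha 1
    simp only [hSdef] at h
    norm_num [Finset.sum_range_succ, Finset.sum_range_one, h1, ha2] at h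
    linarith
  have key : ∀ n : ℕ, 2 * a (n + 1) = 2 - ((n : ℤ) + 1) * n := by
    intro n
    induction n using Nat.strong_induction_on with
    | _ n ih =>
      match n with
      | 0 => simp [h1]
      | 1 => rw [ha2]; norm_num
      | 2 => rw [ha3]; norm_num
      | (k + 3) =>
        have ih' := ih (k + 2) (by omega)
        have h := hrec4 k
        rw [show k + 3 + 1 = k + 4 from by omega]
        rw [h]
        push_cast at ih' ⊢
        linarith [ih']
  intro n hn
  obtain ⟨k, rfl⟩ : ∃ k, n = k + 1 := ⟨n - 1, by omega⟩
  have h := key k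
  push_cast
  push_cast at h
  have h2 : ((k : ℤ) + 1) * ((k : ℤ) + 1 - 1) = ((k : ℤ) + 1) * k := by ring
  rw [h2]
  omega
end

section
/- Let M : (\mathbb{C}^\mathbb{N})^m \to \mathbb{C}^\mathbb{N} be the m-linear operator M(x_{1-m},...,x_0) = [x_{1-m}]_1 \cdots [x_{-1}]_1 \cdot B(x_0), where B is the backward shift and [x]_1 denotes the first coordinate. Then for every n \geq 1 the n-th orbit element satisfies M^{[n]}(x_{1-m},...,x_0) = c_n \cdot B^n(x_0), where c_n is a scalar depending only on [x_{1-m}]_1,...,[x_{-1}]_1 and the first n-1 coordinates of x_0. -/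
/-!
One step of the orbit multiplies by the product of the first coordinates of the `m` preceding
terms and shifts once, so `x_{m+n}` is a product of first coordinates times `Bⁿ x_m`. The first
coordinate of `x_{m+p}` is in turn `c_p · (x_m)_p`, so all these scalars are computed recursively
from the first coordinates of `x_0, …, x_{m-1}` and the initial coordinates of `x_m`.
-/

open Finset

section

variable {R : Type*} [CommMonoid R] {m : ℕ}

/-- The first coordinate of the `k`-th orbit element, as a function of the first coordinates `a`
of the first `m` initial conditions and of the last initial condition `w`. -/
def orbitHead (a : Fin m → R) (w : ℕ → R) (k : ℕ) : R :=
  if h : k < m then a ⟨k, h⟩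
  else (∏ j : Fin (k - m), ∏ i : Fin m, orbitHead a w (j + i)) * w (k - m)
termination_by k
decreasing_by have := i.isLt; have := j.isLt; omega

def orbitCoeff (a : Fin m → R) (w : ℕ → R) (n : ℕ) : R :=
  ∏ j ∈ range n, ∏ i : Fin m, orbitHead a w (j + i)

variable {a : Fin m → R} {w w' : ℕ → R}

theorem orbitHead_of_lt {k : ℕ} (h : k < m) : orbitHead a w k = a ⟨k, h⟩ := by
  rw [orbitHead, dif_pos h]

theorem orbitHead_add_left (p : ℕ) : orbitHead a w (m + p) = orbitCoeff a w p * w p := by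
  rw [orbitHead, dif_neg (by omega), Nat.add_sub_cancel_left, orbitCoeff,
    Fin.prod_univ_eq_prod_range (fun j => ∏ i : Fin m, orbitHead a w (j + i))]

theorem orbitHead_congr {k : ℕ} (h : ∀ j, j + m ≤ k → w j = w' j) :
    orbitHead a w k = orbitHead a w' k := by
  induction k using Nat.strong_induction_on with
  | _ k ih =>
    by_cases hk : k < m
    · rw [orbitHead_of_lt hk, orbitHead_of_lt hk]
    · obtain ⟨p, rfl⟩ := Nat.exists_eq_add_of_le (not_lt.mp hk)
      rw [orbitHead_add_left, orbitHead_add_left, h p (by omega), orbitCoeff, orbitCoeff]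
      refine congrArg (· * w' p) (prod_congr rfl fun j hj => prod_congr rfl fun i _ => ?_)
      have := i.isLt
      have := mem_range.mp hj
      exact ih _ (by omega) fun l hl => h l (by omega)

theorem orbitCoeff_congr {n : ℕ} (h : ∀ j, j + 1 < n → w j = w' j) :
    orbitCoeff a w n = orbitCoeff a w' n :=
  prod_congr rfl fun j hj => prod_congr rfl fun i _ =>
    orbitHead_congr fun l hl => h l (by have := i.isLt; have := mem_range.mp hj; omega)

end

theorem eq_prod_smul_shift_of_eq_smul_shift {R M : Type*} [CommMonoid R] [MulAction R M]
    {y : ℕ → ℕ → M} {s : ℕ → R} (h : ∀ n, y (n + 1) = s n • fun j => y n (j + 1)) (n : ℕ) :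
    y n = (∏ k ∈ range n, s k) • fun j => y 0 (j + n) := by
  induction n with
  | zero => simp
  | succ n ih =>
    rw [h, ih, prod_range_succ]
    funext j
    simp only [Pi.smul_apply, smul_smul, mul_comm (s n), add_assoc, add_comm 1 n]

section

variable {R : Type*} [CommMonoid R] {m : ℕ} {x : ℕ → ℕ → R}
  (hx : ∀ k, x (k + (m + 1)) = (∏ i : Fin m, x (k + i) 0) • fun j => x (k + m) (j + 1))
include hx

theorem orbit_eq_prod_smul_shift (n : ℕ) :
    x (m + n) = (∏ k ∈ range n, ∏ i : Fin m, x (k + i) 0) • fun j => x m (j + n) :=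
  eq_prod_smul_shift_of_eq_smul_shift (y := fun n => x (m + n))
    (fun n => by rw [show m + (n + 1) = n + (m + 1) by omega, hx, add_comm n m]) n

theorem orbit_apply_zero_eq_orbitHead (k : ℕ) :
    x k 0 = orbitHead (fun i : Fin m => x i 0) (x m) k := by
  induction k using Nat.strong_induction_on with
  | _ k ih =>
    by_cases hk : k < m
    · rw [orbitHead_of_lt hk]
    · obtain ⟨p, rfl⟩ := Nat.exists_eq_add_of_le (not_lt.mp hk)
      rw [orbitHead_add_left, orbit_eq_prod_smul_shift hx, orbitCoeff]
      simp only [Pi.smul_apply, smul_eq_mul, zero_add]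
      refine congrArg (· * x m p) (prod_congr rfl fun j hj => prod_congr rfl fun i _ => ?_)
      have := i.isLt
      have := mem_range.mp hj
      exact ih _ (by omega)

theorem orbit_eq_orbitCoeff_smul_shift (n : ℕ) :
    x (m + n) = orbitCoeff (fun i : Fin m => x i 0) (x m) n • fun j => x m (j + n) := by
  simp only [orbit_eq_prod_smul_shift hx n, orbitCoeff, ← orbit_apply_zero_eq_orbitHead hx]

end

/-- The `(m+1)`-linear operator `M(x_{1-m},…,x_{-1},x_0) = [x_{1-m}]_1 ⋯ [x_{-1}]_1 ⋅ B(x_0)`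
on `ℂ^ℕ`. Each orbit element `x_{m+n}` (the `n`-th orbit element, `n ≥ 1`) equals
`c_n • B^n(x_0)`, where `c_n` depends only on the first coordinates of the first `m`
initial conditions and on the first `n-1` coordinates of the last one. -/
theorem stmt_7 {m : ℕ}
    (M : (Fin (m + 1) → (ℕ → ℂ)) → (ℕ → ℂ))
    (hM : ∀ v, M v = (∏ i : Fin m, v i.castSucc 0) • fun j => v (Fin.last m) (j + 1)) :
    ∃ c : (Fin m → ℂ) → (ℕ → ℂ) → ℕ → ℂ,
      (∀ (a : Fin m → ℂ) (w w' : ℕ → ℂ) (n : ℕ), 1 ≤ n →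
        (∀ j : ℕ, j + 1 < n → w j = w' j) → c a w n = c a w' n) ∧
      (∀ x : ℕ → (ℕ → ℂ),
        (∀ k : ℕ, x (k + (m + 1)) = M (fun i : Fin (m + 1) => x (k + (i : ℕ)))) →
        ∀ n : ℕ, 1 ≤ n →
          x (m + n) =
            c (fun i : Fin m => x (i : ℕ) 0) (x m) n • fun j => x m (j + n)) := by
  refine ⟨orbitCoeff, fun _ _ _ _ _ h => orbitCoeff_congr h, fun x hx n _ => ?_⟩
  refine orbit_eq_orbitCoeff_smul_shift (fun k => ?_) n
  rw [hx, hM]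
  simp only [Fin.val_castSucc, Fin.val_last]
end

section
/- Let M : (\mathbb{C}^\mathbb{N})^m \to \mathbb{C}^\mathbb{N} be defined by M(x_{1-m},...,x_0) = [x_{1-m}]_1 \cdots [x_{-1}]_1 B(x_0), where B is the backward shift on \mathbb{C}^\mathbb{N} with the product topology. Then M is strongly transitive: for all nonempty open sets U_{1-m},...,U_0, V in \mathbb{C}^\mathbb{N} there exists n such that M^{[n]}(U_{1-m} \times \cdots \times U_0) \cap V \neq \emptyset. -/
/-!
Write `x₀ = (x₀ 0, …, x₀ m)` for the initial conditions. Unfolding the recursion gives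
`x (m + s) = w s • Bˢ (x₀ m)`, where the scalar `w s` is a product of zeroth coordinates of
earlier terms and therefore only depends on the first `s` coordinates of `x₀ m`. Hence one may
first fix these coordinates (and those of the other `x₀ i`) so that every scalar is nonzero and
the `x₀ i` lie in the `U i`, and then prescribe the tail of `x₀ m` as `(w n)⁻¹ • v` for a point
`v ∈ V`: this changes neither `w n` nor, for `n` large, membership in `U m`, and it makes
`x (m + n) = v`.
-/

open Finset Topology

section Topology

variable {X : Type*} [TopologicalSpace X]

theorem IsOpen.exists_forall_ne_mem {ι : Type*} {U : Set (ι → X)} (hU : IsOpen U)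
    (hne : U.Nonempty) (a : X) [(𝓝[≠] a).NeBot] : ∃ x ∈ U, ∀ j, x j ≠ a := by
  obtain ⟨x, hxU, hx⟩ := (dense_pi Set.univ fun _ _ => dense_compl_singleton a).inter_open_nonempty
    U hU hne
  exact ⟨x, hxU, fun j => hx j (Set.mem_univ j)⟩

theorem IsOpen.exists_mem_of_forall_lt_eq {U : Set (ℕ → X)} (hU : IsOpen U) {x : ℕ → X}
    (hx : x ∈ U) : ∃ N, ∀ y : ℕ → X, (∀ j < N, y j = x j) → y ∈ U := by
  obtain ⟨I, u, hu, hsub⟩ := isOpen_pi_iff.mp hU x hx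
  refine ⟨I.sup id + 1, fun y hy => hsub fun j hj => ?_⟩
  rw [hy j (Nat.lt_succ_of_le (Finset.le_sup (f := id) hj))]
  exact (hu j hj).2

end Topology

def mOrbit {E : Type*} {m : ℕ} (M : (Fin (m + 1) → E) → E) (x₀ : Fin (m + 1) → E) : ℕ → E
  | t => if h : t < m + 1 then x₀ ⟨t, h⟩ else M fun i => mOrbit M x₀ (t - (m + 1) + i)
termination_by t => t
decreasing_by have := i.2; omega

section mOrbit

variable {E : Type*} {m : ℕ} (M : (Fin (m + 1) → E) → E) (x₀ : Fin (m + 1) → E)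

theorem mOrbit_of_lt {t : ℕ} (h : t < m + 1) : mOrbit M x₀ t = x₀ ⟨t, h⟩ := by
  rw [mOrbit, dif_pos h]

theorem mOrbit_coe (i : Fin (m + 1)) : mOrbit M x₀ i = x₀ i :=
  mOrbit_of_lt M x₀ i.2

theorem mOrbit_add (k : ℕ) :
    mOrbit M x₀ (k + (m + 1)) = M fun i => mOrbit M x₀ (k + i) := by
  rw [mOrbit, dif_neg (by omega), Nat.add_sub_cancel]

end mOrbit

/-- `[x]_1 ⋯ [y]_1 • B z`, where the first coordinate `[x]_1` is `x 0`. -/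
def scaledShift (m : ℕ) (v : Fin (m + 1) → ℕ → ℂ) : ℕ → ℂ :=
  (∏ i : Fin m, v i.castSucc 0) • fun j => v (Fin.last m) (j + 1)

/-- The scalar `w s` with `mOrbit (scaledShift m) x₀ (m + s) = w s • Bˢ (x₀ m)`. -/
noncomputable def shiftWeight {m : ℕ} (x₀ : Fin (m + 1) → ℕ → ℂ) (s : ℕ) : ℂ :=
  ∏ k ∈ range s, ∏ i : Fin m, mOrbit (scaledShift m) x₀ (k + i) 0

section scaledShift

variable {m : ℕ}

theorem mOrbit_scaledShift (x₀ : Fin (m + 1) → ℕ → ℂ) (s j : ℕ) :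
    mOrbit (scaledShift m) x₀ (m + s) j = shiftWeight x₀ s * x₀ (Fin.last m) (s + j) := by
  induction s generalizing j with
  | zero => simpa [shiftWeight] using congrFun (mOrbit_coe (scaledShift m) x₀ (Fin.last m)) j
  | succ s ih =>
    rw [show m + (s + 1) = s + (m + 1) by omega, mOrbit_add, scaledShift, Pi.smul_apply,
      smul_eq_mul, Fin.val_last, add_comm s m, ih, shiftWeight, shiftWeight, prod_range_succ,
      show s + (j + 1) = s + 1 + j by omega]
    simp only [Fin.val_castSucc]
    ring

theorem mOrbit_scaledShift_zero (x₀ : Fin (m + 1) → ℕ → ℂ) (t : ℕ) :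
    (∃ h : t < m, mOrbit (scaledShift m) x₀ t 0 = x₀ (Fin.castSucc ⟨t, h⟩) 0) ∨
      (m ≤ t ∧ mOrbit (scaledShift m) x₀ t 0 =
        shiftWeight x₀ (t - m) * x₀ (Fin.last m) (t - m)) := by
  by_cases h : t < m
  · exact Or.inl ⟨h, by rw [mOrbit_of_lt _ _ (by omega)]; rfl⟩
  · refine Or.inr ⟨by omega, ?_⟩
    simpa [Nat.add_sub_cancel' (not_lt.mp h)] using mOrbit_scaledShift x₀ (t - m) 0

theorem shiftWeight_ne_zero {x₀ : Fin (m + 1) → ℕ → ℂ} (h₀ : ∀ i : Fin m, x₀ i.castSucc 0 ≠ 0)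
    (hlast : ∀ j, x₀ (Fin.last m) j ≠ 0) (s : ℕ) : shiftWeight x₀ s ≠ 0 := by
  induction s using Nat.strong_induction_on with
  | _ s ih =>
    refine prod_ne_zero_iff.mpr fun k hk => prod_ne_zero_iff.mpr fun i _ => ?_
    have := mem_range.mp hk
    rcases mOrbit_scaledShift_zero x₀ (k + i) with ⟨_, he⟩ | ⟨_, he⟩ <;> rw [he]
    · exact h₀ _
    · exact mul_ne_zero (ih _ (by omega)) (hlast _)

theorem shiftWeight_congr {x₀ y₀ : Fin (m + 1) → ℕ → ℂ} {N : ℕ}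
    (h₀ : ∀ i : Fin m, x₀ i.castSucc 0 = y₀ i.castSucc 0)
    (hlast : ∀ j < N, x₀ (Fin.last m) j = y₀ (Fin.last m) j) :
    ∀ s ≤ N, shiftWeight x₀ s = shiftWeight y₀ s := by
  intro s
  induction s using Nat.strong_induction_on with
  | _ s ih =>
    intro hs
    refine prod_congr rfl fun k hk => prod_congr rfl fun i _ => ?_
    have := mem_range.mp hk
    rcases mOrbit_scaledShift_zero x₀ (k + i) with ⟨_, hx⟩ | ⟨_, hx⟩
    · rcases mOrbit_scaledShift_zero y₀ (k + i) with ⟨_, hy⟩ | ⟨_, _⟩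
      · rw [hx, hy, h₀]
      · omega
    · rcases mOrbit_scaledShift_zero y₀ (k + i) with ⟨_, _⟩ | ⟨_, hy⟩
      · omega
      · rw [hx, hy, ih _ (by omega) (by omega), hlast _ (by omega)]

end scaledShift

/-- Strong transitivity of `M(x_{1-m},…,x_0) = [x_{1-m}]_1 ⋯ [x_{-1}]_1 ⋅ B(x_0)` on `ℂ^ℕ`
with the product topology: for all nonempty open sets `U_{1-m},…,U_0, V` there are initial
conditions in the `U_i` and `n ≥ 1` with the `n`-th orbit element in `V`. -/
theorem stmt_8 {m : ℕ}
    (M : (Fin (m + 1) → (ℕ → ℂ)) → (ℕ → ℂ))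
    (hM : ∀ v, M v = (∏ i : Fin m, v i.castSucc 0) • fun j => v (Fin.last m) (j + 1)) :
    ∀ (U : Fin (m + 1) → Set (ℕ → ℂ)) (V : Set (ℕ → ℂ)),
      (∀ i, IsOpen (U i)) → (∀ i, (U i).Nonempty) → IsOpen V → V.Nonempty →
      ∃ (x : ℕ → (ℕ → ℂ)) (n : ℕ), 1 ≤ n ∧
        (∀ i : Fin (m + 1), x (i : ℕ) ∈ U i) ∧
        (∀ k : ℕ, x (k + (m + 1)) = M (fun i : Fin (m + 1) => x (k + (i : ℕ)))) ∧
        x (m + n) ∈ V := by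
  intro U V hU hUne _ ⟨v, hv⟩
  obtain rfl : M = scaledShift m := funext hM
  choose z hzU hz using fun i => IsOpen.exists_forall_ne_mem (hU i) (hUne i) 0
  obtain ⟨N, hN⟩ := IsOpen.exists_mem_of_forall_lt_eq (hU (Fin.last m)) (hzU (Fin.last m))
  set n := N + 1
  set w := shiftWeight z n
  let x₀ : Fin (m + 1) → ℕ → ℂ :=
    Fin.snoc (fun i => z i.castSucc) fun j => if j < n then z (Fin.last m) j else v (j - n) / w
  have hx₀ : shiftWeight x₀ n = w :=
    shiftWeight_congr (by simp [x₀]) (fun j hj => by simp [x₀, hj]) n le_rfl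
  refine ⟨mOrbit (scaledShift m) x₀, n, by omega, fun i => ?_, mOrbit_add _ x₀, ?_⟩
  · rw [mOrbit_coe]
    refine Fin.lastCases ?_ (fun i => by simpa [x₀] using hzU i.castSucc) i
    exact hN _ fun j hj => by simp [x₀, show j < n by omega]
  · convert hv using 1
    funext j
    rw [mOrbit_scaledShift, hx₀]
    simp only [x₀, Fin.snoc_last, add_lt_iff_neg_left, not_lt_zero, if_false,
      Nat.add_sub_cancel_left]
    exact mul_div_cancel₀ _ (shiftWeight_ne_zero (fun i => hz _ 0) (hz _) n)
end

section
/- Let B be the symmetric bilinear map on H(\mathbb{C}) given (in its induced iteration) by B(g,f)(z) = g(0) f(z+1). Then for every n \geq 1 and entire functions f_1, f_2, the n-th orbit element is B^{[n]}(f_1,f_2)(z) = c_n(f_1,f_2) f_2(z+n), where c_n(f_1,f_2) = f_1(0)^{F_n} f_2(0)^{F_{n-1}} f_2(1)^{F_{n-2}} \cdots f_2(n-2)^{F_1} and F_n is the Fibonacci sequence (F_1 = F_2 = 1). -/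
noncomputable def cc (f₁ f₂ : ℂ → ℂ) (n : ℕ) : ℂ :=
  f₁ 0 ^ Nat.fib n * ∏ j ∈ Finset.range (n - 1), f₂ (j : ℂ) ^ Nat.fib (n - 1 - j)

lemma cc_rec (f₁ f₂ : ℂ → ℂ) (n : ℕ) :
    cc f₁ f₂ (n + 2) = cc f₁ f₂ n * cc f₁ f₂ (n + 1) * f₂ n := by
  unfold cc
  have e0 : n + 2 - 1 = n + 1 := rfl
  simp only [e0, Nat.add_sub_cancel]
  rw [Finset.prod_range_succ]
  have h1 : ∏ j ∈ Finset.range n, f₂ (j : ℂ) ^ Nat.fib (n + 1 - j) =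
      ∏ j ∈ Finset.range n, (f₂ (j : ℂ) ^ Nat.fib (n - 1 - j) * f₂ (j : ℂ) ^ Nat.fib (n - j)) := by
    refine Finset.prod_congr rfl fun j hj => ?_
    have hj' := Finset.mem_range.mp hj
    rw [← pow_add]
    congr 1
    have e1 : n + 1 - j = (n - 1 - j) + 2 := by omega
    have e2 : n - j = (n - 1 - j) + 1 := by omega
    rw [e1, e2, Nat.fib_add_two]
  have h2 : ∏ j ∈ Finset.range n, f₂ (j : ℂ) ^ Nat.fib (n - 1 - j) =
      ∏ j ∈ Finset.range (n - 1), f₂ (j : ℂ) ^ Nat.fib (n - 1 - j) := by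
    cases n with
    | zero => simp
    | succ m =>
      rw [Finset.prod_range_succ]
      simp
  rw [h1, Finset.prod_mul_distrib, h2]
  have e3 : n + 1 - n = 1 := by omega
  rw [e3, Nat.fib_one, pow_one, Nat.fib_add_two, pow_add]
  ring

/-- For the bilinear map `B(g,f)(z) = g(0) f(z+1)` on entire functions, the `n`-th orbit
element with initial conditions `(f₁, f₂)` is
`c_n(f₁,f₂) f₂(· + n)` with `c_n(f₁,f₂) = f₁(0)^{F_n} f₂(0)^{F_{n-1}} ⋯ f₂(n-2)^{F_1}`. -/
theorem stmt_9 (f₁ f₂ : ℂ → ℂ) (hf₁ : Differentiable ℂ f₁) (hf₂ : Differentiable ℂ f₂)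
    (g : ℕ → (ℂ → ℂ)) (hg0 : g 0 = f₁) (hg1 : g 1 = f₂)
    (hrec : ∀ n : ℕ, g (n + 2) = fun z => g n 0 * g (n + 1) (z + 1)) :
    ∀ n : ℕ, 1 ≤ n → ∀ z : ℂ,
      g (n + 1) z =
        (f₁ 0 ^ Nat.fib n * ∏ j ∈ Finset.range (n - 1), f₂ (j : ℂ) ^ Nat.fib (n - 1 - j)) *
          f₂ (z + (n : ℂ)) := by
  have H : ∀ n : ℕ, ∀ z : ℂ, g (n + 1) z = cc f₁ f₂ n * f₂ (z + (n : ℂ)) := by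
    intro n
    induction n using Nat.strong_induction_on with
    | _ n ih =>
      match n with
      | 0 => intro z; simp [hg1, cc]
      | 1 =>
        intro z
        rw [hrec 0]
        simp [hg0, hg1, cc]
      | (m + 2) =>
        intro z
        rw [hrec (m + 1)]
        simp only
        rw [ih m (by omega) 0, ih (m + 1) (by omega) (z + 1), cc_rec]
        have e1 : (0 : ℂ) + (m : ℂ) = (m : ℂ) := by ring
        have e2 : (z + 1) + ((m + 1 : ℕ) : ℂ) = z + ((m + 2 : ℕ) : ℂ) := by push_cast; ring
        rw [e1, e2]
        ring
  intro n hn z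
  rw [H n z]
  rfl
end

section
/- Let c : \mathbb{N} \to \mathbb{C} satisfy |c_1| < \delta, |c_2| < \delta, and |c_{n+1}| \leq |c_n| |c_{n-1}| (n-2)! for n \geq 2, where \delta = 1/(k \cdot 2^2) and k \geq 1 is a constant satisfying k 2^{2^{n/2}} \geq (n-2)! 2^{2^{(n-1)/2}} for all n \geq 2. Then |c_n| \leq 1/(k \cdot 2^{2^{n/2}}) for every n \geq 1. -/
theorem stmt_12 (k : ℝ) (hk : 1 ≤ k)
    (hkprop : ∀ n : ℕ, 2 ≤ n →
      ((n - 2).factorial : ℝ) * 2 ^ ((2 : ℝ) ^ (((n : ℝ) - 1) / 2)) ≤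
        k * 2 ^ ((2 : ℝ) ^ ((n : ℝ) / 2)))
    (c : ℕ → ℂ)
    (h1 : ‖c 1‖ < 1 / (k * 2 ^ 2))
    (h2 : ‖c 2‖ < 1 / (k * 2 ^ 2))
    (hrec : ∀ n : ℕ, 2 ≤ n →
      ‖c (n + 1)‖ ≤
        ‖c n‖ * ‖c (n - 1)‖ * ((n - 2).factorial : ℝ)) :
    ∀ n : ℕ, 1 ≤ n →
      ‖c n‖ ≤ 1 / (k * 2 ^ ((2 : ℝ) ^ ((n : ℝ) / 2))) := by
  have hk0 : (0:ℝ) < k := lt_of_lt_of_le one_pos hk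
  have hp : ∀ x : ℝ, (0:ℝ) < (2:ℝ) ^ x := fun x => Real.rpow_pos_of_pos two_pos x
  intro n
  induction n using Nat.strong_induction_on with
  | _ n ih =>
  intro hn
  match n, hn with
  | 1, _ =>
    have he : (2:ℝ) ^ ((2:ℝ) ^ (((1:ℕ):ℝ) / 2)) ≤ 2 ^ (2:ℕ) := by
      push_cast
      rw [show ((2:ℝ):ℝ) ^ (2:ℕ) = (2:ℝ) ^ (2:ℝ) by
        rw [← Real.rpow_natCast (2:ℝ) 2]; norm_num]
      apply Real.rpow_le_rpow_of_exponent_le one_le_two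
      calc (2:ℝ) ^ ((1:ℝ)/2) ≤ (2:ℝ) ^ (1:ℝ) :=
            Real.rpow_le_rpow_of_exponent_le one_le_two (by norm_num)
        _ = 2 := Real.rpow_one 2
    refine h1.le.trans (one_div_le_one_div_of_le (by positivity) ?_)
    exact mul_le_mul_of_nonneg_left he hk0.le
  | 2, _ =>
    have he : (2:ℝ) ^ ((2:ℝ) ^ (((2:ℕ):ℝ) / 2)) = 2 ^ (2:ℕ) := by
      push_cast
      norm_num
    rw [he]; exact h2.le
  | (m+1), _ =>
    rcases le_or_gt 2 m with hm | hm
    · have h1m : 1 ≤ m := le_trans one_le_two hm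
      have ihm := ih m (Nat.lt_succ_self m) h1m
      have ihm1 := ih (m-1) (by omega) (by omega)
      have hcast : ((m-1 : ℕ) : ℝ) = (m:ℝ) - 1 := by
        push_cast [Nat.cast_sub h1m]; ring
      rw [hcast] at ihm1
      set X : ℝ := (2:ℝ) ^ ((m:ℝ)/2) with hX
      set Y : ℝ := (2:ℝ) ^ (((m:ℝ)-1)/2) with hY
      have hkp := hkprop m hm
      rw [← hX, ← hY] at hkp
      have hF : (0:ℝ) ≤ ((m-2).factorial : ℝ) := Nat.cast_nonneg _
      have habs1 : (0:ℝ) ≤ ‖c (m-1)‖ := norm_nonneg _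
      have hZ : ((m:ℝ)+1)/2 = 1 + ((m:ℝ)-1)/2 := by ring
      have key : 1/(k * 2^X) * (1/(k * 2^Y)) * ((m-2).factorial : ℝ)
          ≤ 1/(k * 2 ^ ((2:ℝ) ^ (((m:ℝ)+1)/2))) := by
        rw [hZ, Real.rpow_add two_pos, Real.rpow_one]
        rw [← hY, show (2:ℝ)*Y = Y + Y by ring, Real.rpow_add two_pos]
        rw [div_mul_div_comm, div_mul_eq_mul_div, one_mul, one_mul,
          div_le_div_iff₀ (by positivity) (by positivity), one_mul]
        calc ((m-2).factorial : ℝ) * (k * ((2:ℝ)^Y * (2:ℝ)^Y))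
            = (((m-2).factorial : ℝ) * (2:ℝ)^Y) * (k * (2:ℝ)^Y) := by ring
          _ ≤ (k * (2:ℝ)^X) * (k * (2:ℝ)^Y) :=
              mul_le_mul_of_nonneg_right hkp (by positivity)
      calc ‖c (m+1)‖
          ≤ ‖c m‖ * ‖c (m-1)‖ * ((m-2).factorial : ℝ) :=
            hrec m hm
        _ ≤ 1/(k * 2^X) * (1/(k * 2^Y)) * ((m-2).factorial : ℝ) := by
            apply mul_le_mul_of_nonneg_right _ hF
            exact mul_le_mul ihm ihm1 habs1 (by positivity)
        _ ≤ 1/(k * 2 ^ ((2:ℝ) ^ (((m:ℝ)+1)/2))) := key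
        _ = 1/(k * 2 ^ ((2:ℝ) ^ ((((m+1:ℕ)):ℝ)/2))) := by push_cast; ring_nf
    · interval_cases m
      · -- m = 0, n = 1
        have he : (2:ℝ) ^ ((2:ℝ) ^ (((0+1:ℕ):ℝ) / 2)) ≤ 2 ^ (2:ℕ) := by
          push_cast
          rw [show ((2:ℝ):ℝ) ^ (2:ℕ) = (2:ℝ) ^ (2:ℝ) by
            rw [← Real.rpow_natCast (2:ℝ) 2]; norm_num]
          apply Real.rpow_le_rpow_of_exponent_le one_le_two
          calc (2:ℝ) ^ ((1:ℝ)/2) ≤ (2:ℝ) ^ (1:ℝ) :=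
                Real.rpow_le_rpow_of_exponent_le one_le_two (by norm_num)
            _ = 2 := Real.rpow_one 2
        refine h1.le.trans (one_div_le_one_div_of_le (by positivity) ?_)
        exact mul_le_mul_of_nonneg_left he hk0.le
      · -- m = 1, n = 2
        have he : (2:ℝ) ^ ((2:ℝ) ^ (((1+1:ℕ):ℝ) / 2)) = 2 ^ (2:ℕ) := by
          push_cast
          norm_num
        rw [he]; exact h2.le
end

section
/- Let \omega_n = 1/n^2 and B_\omega the weighted backward shift on \ell_1 with [B_\omega x]_i = \omega_i x_{i+1}. There exists a vector y \in \ell_1 that is universal for the family \{2^n (n!)^2 B_\omega^n : n \in \mathbb{N}\}, i.e., the set \{2^n (n!)^2 B_\omega^n y : n \in \mathbb{N}\} is dense in \ell_1. -/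
open Finset
open scoped ENNReal

private lemma fact_add_prod (i n : ℕ) :
    (i + n).factorial = i.factorial * ∏ k ∈ range n, (i + k + 1) := by
  rw [← prod_range_add_one_eq_factorial, ← prod_range_add_one_eq_factorial, prod_range_add]

private def Qn (n i : ℕ) : ℕ := ∏ j ∈ range i, (n + j + 1)

private noncomputable def dd (n i : ℕ) : ℂ :=
  (((Qn n i) ^ 2 : ℕ) : ℂ) / ((2 ^ n * (i.factorial) ^ 2 : ℕ) : ℂ)

private lemma key_scalar (n i : ℕ) :
    ((2 : ℂ) ^ n * ((n.factorial : ℕ) : ℂ) ^ 2) * dd n i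
      * ∏ k ∈ range n, ((((i + k : ℕ) : ℂ) + 1) ^ 2)⁻¹ = 1 := by
  have hnat : n.factorial * Qn n i = i.factorial * ∏ k ∈ range n, (i + k + 1) := by
    rw [← fact_add_prod i n, Qn, ← fact_add_prod n i, add_comm]
  set Pc : ℂ := ∏ k ∈ range n, (((i + k : ℕ) : ℂ) + 1) with hPc
  have hprod : (∏ k ∈ range n, ((((i + k : ℕ) : ℂ) + 1) ^ 2)⁻¹) = (Pc ^ 2)⁻¹ := by
    rw [hPc, ← prod_pow, prod_inv_distrib]
  have hPcast : ((∏ k ∈ range n, (i + k + 1) : ℕ) : ℂ) = Pc := by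
    rw [hPc]; push_cast; rfl
  have hC : ((n.factorial : ℕ) : ℂ) * ((Qn n i : ℕ) : ℂ) = ((i.factorial : ℕ) : ℂ) * Pc := by
    rw [← hPcast, ← Nat.cast_mul, ← Nat.cast_mul, hnat]
  have hPne : Pc ≠ 0 := by
    rw [← hPcast]
    exact Nat.cast_ne_zero.2 (Finset.prod_ne_zero_iff.2 fun k _ => by omega)
  have hif : ((i.factorial : ℕ) : ℂ) ≠ 0 := Nat.cast_ne_zero.2 i.factorial_pos.ne'
  have h2 : ((2 : ℂ) ^ n) ≠ 0 := pow_ne_zero _ two_ne_zero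
  rw [hprod, dd]
  push_cast
  field_simp
  linear_combination ((n.factorial : ℂ) * (Qn n i : ℂ) + (i.factorial : ℂ) * Pc) * hC

private lemma norm_dd_le (n i m : ℕ) (him : i ≤ m) :
    ‖dd n i‖ ≤ ((n + m + 1 : ℕ) : ℝ) ^ (2 * m) / 2 ^ n := by
  have hQ : Qn n i ^ 2 ≤ (n + m + 1) ^ (2 * m) := by
    have h1 : Qn n i ≤ (n + m + 1) ^ m := by
      calc Qn n i ≤ ∏ _j ∈ range i, (n + m + 1) :=
            Finset.prod_le_prod' fun j hj => by
              have := Finset.mem_range.1 hj; omega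
        _ = (n + m + 1) ^ i := by rw [prod_const, card_range]
        _ ≤ (n + m + 1) ^ m := Nat.pow_le_pow_right (by omega) him
    calc Qn n i ^ 2 ≤ ((n + m + 1) ^ m) ^ 2 := Nat.pow_le_pow_left h1 2
      _ = (n + m + 1) ^ (2 * m) := by rw [← pow_mul, mul_comm]
  have hden : (2 : ℝ) ^ n ≤ ((2 ^ n * (i.factorial) ^ 2 : ℕ) : ℝ) := by
    push_cast
    have h1 : (1 : ℝ) ≤ (i.factorial : ℝ) := by exact_mod_cast i.factorial_pos
    have h2 : (0 : ℝ) < 2 ^ n := pow_pos (by norm_num) n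
    have h3 : (1 : ℝ) ≤ (i.factorial : ℝ) ^ 2 := by nlinarith
    nlinarith [mul_le_mul_of_nonneg_left h3 h2.le]
  rw [dd, norm_div]
  rw [Complex.norm_natCast, Complex.norm_natCast]
  refine div_le_div₀ (by positivity) ?_ (by positivity) hden
  exact_mod_cast hQ

open Finset
open scoped ENNReal

local notation "X₁" => lp (fun _ : ℕ => ℂ) 1

private lemma bpow_apply (B : lp (fun _ : ℕ => ℂ) 1 →L[ℂ] lp (fun _ : ℕ => ℂ) 1)
    (hB : ∀ (x : lp (fun _ : ℕ => ℂ) 1) (i : ℕ),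
      (B x : ∀ _ : ℕ, ℂ) i = (x : ∀ _ : ℕ, ℂ) (i + 1) / ((i : ℂ) + 1) ^ 2) :
    ∀ (n : ℕ) (x : lp (fun _ : ℕ => ℂ) 1) (i : ℕ),
      ((B ^ n) x : ∀ _ : ℕ, ℂ) i
        = (x : ∀ _ : ℕ, ℂ) (i + n) * ∏ k ∈ range n, ((((i + k : ℕ) : ℂ) + 1) ^ 2)⁻¹
  | 0, x, i => by simp
  | (n+1), x, i => by
    have h1 : ((B ^ (n+1)) x : ∀ _ : ℕ, ℂ) i = ((B ^ n) (B x) : ∀ _ : ℕ, ℂ) i := by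
      rw [pow_succ, ContinuousLinearMap.mul_apply]
    rw [h1, bpow_apply B hB n (B x) i, hB x (i + n), prod_range_succ, ← add_assoc]
    rw [div_eq_mul_inv]
    ring

private lemma single_sub (i : ℕ) (a b : ℂ) :
    lp.single (E := fun _ : ℕ => ℂ) 1 i (a - b) = lp.single 1 i a - lp.single 1 i b := by
  apply lp.ext
  funext j
  rw [lp.coeFn_sub, Pi.sub_apply]
  by_cases h : j = i
  · subst h; rw [lp.single_apply_self, lp.single_apply_self, lp.single_apply_self]
  · rw [lp.single_apply_ne 1 i _ h, lp.single_apply_ne 1 i _ h, lp.single_apply_ne 1 i _ h,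
      sub_zero]

private lemma key_single (B : lp (fun _ : ℕ => ℂ) 1 →L[ℂ] lp (fun _ : ℕ => ℂ) 1)
    (hB : ∀ (x : lp (fun _ : ℕ => ℂ) 1) (i : ℕ),
      (B x : ∀ _ : ℕ, ℂ) i = (x : ∀ _ : ℕ, ℂ) (i + 1) / ((i : ℂ) + 1) ^ 2)
    (n i : ℕ) (a : ℂ) :
    ((2 : ℂ) ^ n * ((n.factorial : ℕ) : ℂ) ^ 2) • ((B ^ n) (lp.single 1 (i + n) (dd n i * a)))
      = lp.single 1 i a := by
  apply lp.ext
  funext j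
  rw [lp.coeFn_smul, Pi.smul_apply, bpow_apply B hB n _ j]
  by_cases h : j = i
  · subst h
    rw [lp.single_apply_self, lp.single_apply_self]
    have hk := key_scalar n j
    rw [smul_eq_mul]
    linear_combination a * hk
  · rw [lp.single_apply_ne (E := fun _ : ℕ => ℂ) 1 (i + n) _ (by omega : j + n ≠ i + n),
      lp.single_apply_ne (E := fun _ : ℕ => ℂ) 1 i a h]
    simp

/-- There is a vector `y ∈ ℓ¹` universal for the family `{2ⁿ (n!)² B_ωⁿ}`, where `B_ω` is the
weighted backward shift `(B x) i = x (i+1) / (i+1)²` (0-based indexing). -/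
theorem stmt_16
    (B : lp (fun _ : ℕ => ℂ) 1 →L[ℂ] lp (fun _ : ℕ => ℂ) 1)
    (hB : ∀ (x : lp (fun _ : ℕ => ℂ) 1) (i : ℕ),
      (B x : ∀ _ : ℕ, ℂ) i = (x : ∀ _ : ℕ, ℂ) (i + 1) / ((i : ℂ) + 1) ^ 2) :
    ∃ y : lp (fun _ : ℕ => ℂ) 1,
      Dense (Set.range fun n : ℕ =>
        ((2 : ℂ) ^ n * (n.factorial : ℂ) ^ 2) • ((B ^ n) y)) := by
  classical
  haveI : Fact ((1 : ℝ≥0∞) ≤ 1) := ⟨le_refl _⟩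
  have hp1 : 0 < (1 : ℝ≥0∞).toReal := by simp
  let c : ℕ → ℂ := fun n => (2 : ℂ) ^ n * (n.factorial : ℂ) ^ 2
  let T : ℕ → (lp (fun _ : ℕ => ℂ) 1 →L[ℂ] lp (fun _ : ℕ => ℂ) 1) := fun n => c n • (B ^ n)
  have hT : ∀ n y, T n y = c n • ((B ^ n) y) := fun n y => rfl
  -- truncations approximate
  have trunc : ∀ (x : lp (fun _ : ℕ => ℂ) 1) (ε : ℝ), 0 < ε → ∃ M : ℕ,
      ‖x - ∑ i ∈ Finset.range M, lp.single 1 i ((x : ∀ _ : ℕ, ℂ) i)‖ < ε := by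
    intro x ε hε
    obtain ⟨M, hM⟩ := (((lp.hasSum_single ENNReal.one_ne_top x).tendsto_sum_nat).eventually
      (Metric.ball_mem_nhds x hε)).exists
    exact ⟨M, by rwa [dist_eq_norm, norm_sub_rev] at hM⟩
  -- T n kills truncations supported below n
  have Tzero : ∀ (M n : ℕ) (a : ℕ → ℂ), M ≤ n →
      T n (∑ i ∈ Finset.range M, lp.single 1 i (a i)) = 0 := by
    intro M n a hMn
    apply lp.ext
    funext k
    rw [hT, lp.coeFn_smul, Pi.smul_apply, bpow_apply B hB n _ k]
    have hz : ((∑ i ∈ Finset.range M, lp.single 1 i (a i) :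
        lp (fun _ : ℕ => ℂ) 1) : ∀ _ : ℕ, ℂ) (k + n) = 0 := by
      rw [lp.coeFn_sum, Finset.sum_apply]
      refine Finset.sum_eq_zero fun i hi => ?_
      exact lp.single_apply_ne (E := fun _ : ℕ => ℂ) 1 i _
        (by have := Finset.mem_range.1 hi; omega)
    rw [hz, zero_mul, smul_zero]
    simp
  -- T n inverts the shifted block
  have Tblock : ∀ (n m : ℕ) (a : ℕ → ℂ),
      T n (∑ i ∈ Finset.range m, lp.single (E := fun _ : ℕ => ℂ) 1 (i + n) (dd n i * a i))
        = ∑ i ∈ Finset.range m, lp.single 1 i (a i) := by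
    intro n m a
    rw [map_sum]
    exact Finset.sum_congr rfl fun i _ => key_single B hB n i (a i)
  -- norm bound on the shifted block
  have blocknorm : ∀ (n m : ℕ) (a : ℕ → ℂ),
      ‖∑ i ∈ Finset.range m, lp.single (E := fun _ : ℕ => ℂ) 1 (i + n) (dd n i * a i)‖
        ≤ (((n + m + 1 : ℕ) : ℝ) ^ (2 * m) / 2 ^ n) * ∑ i ∈ Finset.range m, ‖a i‖ := by
    intro n m a
    calc ‖∑ i ∈ Finset.range m, lp.single (E := fun _ : ℕ => ℂ) 1 (i + n) (dd n i * a i)‖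
        ≤ ∑ i ∈ Finset.range m, ‖lp.single (E := fun _ : ℕ => ℂ) 1 (i + n) (dd n i * a i)‖ :=
          norm_sum_le _ _
      _ ≤ ∑ i ∈ Finset.range m, (((n + m + 1 : ℕ) : ℝ) ^ (2 * m) / 2 ^ n) * ‖a i‖ := by
          refine Finset.sum_le_sum fun i hi => ?_
          rw [lp.norm_single (E := fun _ : ℕ => ℂ) (p := 1) zero_lt_one (i + n) (dd n i * a i), norm_mul]
          exact mul_le_mul_of_nonneg_right
            (norm_dd_le n i m (by have := Finset.mem_range.1 hi; omega)) (norm_nonneg _)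
      _ = _ := by rw [← Finset.mul_sum]
  -- choosing a large n
  have choose_n : ∀ (m M : ℕ) (C δ : ℝ), 0 < δ → ∃ n : ℕ, M ≤ n ∧
      (((n + m + 1 : ℕ) : ℝ) ^ (2 * m) / 2 ^ n) * C < δ := by
    intro m M C δ hδ
    have h0 := tendsto_pow_const_div_const_pow_of_one_lt (2 * m) (one_lt_two (α := ℝ))
    have h2 := (h0.comp (Filter.tendsto_add_atTop_nat (m + 1))).mul_const ((2 : ℝ) ^ (m + 1) * C)
    rw [zero_mul] at h2
    have h1 : Filter.Tendsto
        (fun n : ℕ => (((n + m + 1 : ℕ) : ℝ) ^ (2 * m) / 2 ^ n) * C) Filter.atTop (nhds 0) := by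
      refine h2.congr fun n => ?_
      simp only [Function.comp_apply]
      have h3 : n + (m + 1) = n + m + 1 := by omega
      rw [h3, pow_add]
      have h4 : (2 : ℝ) ^ n ≠ 0 := by positivity
      have h5 : (2 : ℝ) ^ (m + 1) ≠ 0 := by positivity
      field_simp
      ring
    obtain ⟨n, hn1, hn2⟩ :=
      ((h1.eventually (gt_mem_nhds hδ)).and (Filter.eventually_ge_atTop M)).exists
    exact ⟨n, hn2, hn1⟩
  -- countable dense family of targets
  let cc : ℚ × ℚ → ℂ := fun q => (q.1 : ℂ) + (q.2 : ℂ) * Complex.I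
  let tgt : List (ℚ × ℚ) → lp (fun _ : ℕ => ℂ) 1 := fun L =>
    ∑ i ∈ Finset.range L.length, lp.single 1 i (cc (L.getD i (0, 0)))
  have tgtdense : ∀ (x : lp (fun _ : ℕ => ℂ) 1) (ε : ℝ), 0 < ε → ∃ L, ‖x - tgt L‖ < ε := by
    intro x ε hε
    obtain ⟨M, hM⟩ := trunc x (ε / 2) (by linarith)
    have hqe : ∀ i : ℕ, ∃ qq : ℚ × ℚ,
        ‖(x : ∀ _ : ℕ, ℂ) i - cc qq‖ < ε / (2 * (M + 1)) := by
      intro i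
      have hpos : 0 < ε / (2 * (M + 1)) := by positivity
      obtain ⟨q1, hq1⟩ := exists_rat_near ((x : ∀ _ : ℕ, ℂ) i).re
        (show 0 < ε / (2 * (M + 1)) / 2 by linarith)
      obtain ⟨q2, hq2⟩ := exists_rat_near ((x : ∀ _ : ℕ, ℂ) i).im
        (show 0 < ε / (2 * (M + 1)) / 2 by linarith)
      refine ⟨(q1, q2), ?_⟩
      set w := (x : ∀ _ : ℕ, ℂ) i - cc (q1, q2) with hw
      have h1 : w.re = ((x : ∀ _ : ℕ, ℂ) i).re - q1 := by simp [hw, cc]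
      have h2 : w.im = ((x : ∀ _ : ℕ, ℂ) i).im - q2 := by simp [hw, cc]
      calc ‖w‖ ≤ |w.re| + |w.im| := by
            exact Complex.norm_le_abs_re_add_abs_im w
        _ < ε / (2 * (M + 1)) := by rw [h1, h2]; linarith
    choose q hq using hqe
    refine ⟨(List.range M).map q, ?_⟩
    have htgt : tgt ((List.range M).map q)
        = ∑ i ∈ Finset.range M, lp.single 1 i (cc (q i)) := by
      have hlen : ((List.range M).map q).length = M := by simp
      show ∑ i ∈ Finset.range ((List.range M).map q).length,
          lp.single 1 i (cc (((List.range M).map q).getD i (0, 0)))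
        = ∑ i ∈ Finset.range M, lp.single 1 i (cc (q i))
      rw [hlen]
      refine Finset.sum_congr rfl fun i hi => ?_
      congr 2
      rw [List.getD_eq_getElem?_getD, List.getElem?_map,
        List.getElem?_range (Finset.mem_range.1 hi)]
      rfl
    rw [htgt]
    have hsub : x - ∑ i ∈ Finset.range M, lp.single 1 i (cc (q i))
        = (x - ∑ i ∈ Finset.range M, lp.single 1 i ((x : ∀ _ : ℕ, ℂ) i))
          + ∑ i ∈ Finset.range M, lp.single 1 i ((x : ∀ _ : ℕ, ℂ) i - cc (q i)) := by
      rw [Finset.sum_congr rfl (fun i (_ : i ∈ Finset.range M) => single_sub i _ _),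
        Finset.sum_sub_distrib]
      abel
    rw [hsub]
    have h2 : ‖∑ i ∈ Finset.range M, lp.single 1 i ((x : ∀ _ : ℕ, ℂ) i - cc (q i))‖
        ≤ ∑ i ∈ Finset.range M, ‖(x : ∀ _ : ℕ, ℂ) i - cc (q i)‖ := by
      refine (norm_sum_le _ _).trans (le_of_eq (Finset.sum_congr rfl fun i _ => ?_))
      exact lp.norm_single (E := fun _ : ℕ => ℂ) (p := 1) zero_lt_one i ((x : ∀ _ : ℕ, ℂ) i - cc (q i))
    have h3 : ∑ i ∈ Finset.range M, ‖(x : ∀ _ : ℕ, ℂ) i - cc (q i)‖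
        ≤ M * (ε / (2 * (M + 1))) := by
      have := Finset.sum_le_card_nsmul (Finset.range M)
        (fun i => ‖(x : ∀ _ : ℕ, ℂ) i - cc (q i)‖) (ε / (2 * (M + 1)))
        (fun i _ => (hq i).le)
      simpa using this
    have h4 : (M : ℝ) * (ε / (2 * (M + 1))) < ε / 2 := by
      have hM1 : (0 : ℝ) < (M : ℝ) + 1 := by positivity
      rw [show (M : ℝ) * (ε / (2 * (M + 1))) = ε / 2 * ((M : ℝ) / ((M : ℝ) + 1)) by
        field_simp]
      calc ε / 2 * ((M : ℝ) / ((M : ℝ) + 1)) < ε / 2 * 1 := by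
            refine mul_lt_mul_of_pos_left ?_ (by linarith)
            exact (div_lt_one hM1).2 (by linarith)
        _ = ε / 2 := mul_one _
    calc ‖(x - ∑ i ∈ Finset.range M, lp.single 1 i ((x : ∀ _ : ℕ, ℂ) i))
          + ∑ i ∈ Finset.range M, lp.single 1 i ((x : ∀ _ : ℕ, ℂ) i - cc (q i))‖
        ≤ ‖x - ∑ i ∈ Finset.range M, lp.single 1 i ((x : ∀ _ : ℕ, ℂ) i)‖
          + ‖∑ i ∈ Finset.range M, lp.single 1 i ((x : ∀ _ : ℕ, ℂ) i - cc (q i))‖ :=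
          norm_add_le _ _
      _ < ε := by linarith
  -- the open dense sets
  let U : List (ℚ × ℚ) × ℕ → Set (lp (fun _ : ℕ => ℂ) 1) := fun p =>
    ⋃ n : ℕ, T n ⁻¹' Metric.ball (tgt p.1) (1 / (p.2 + 1))
  have Uopen : ∀ p, IsOpen (U p) :=
    fun p => isOpen_iUnion fun n => Metric.isOpen_ball.preimage (T n).continuous
  have Udense : ∀ p, Dense (U p) := by
    rintro ⟨L, j⟩
    rw [Metric.dense_iff]
    intro z δ hδ
    obtain ⟨M, hM⟩ := trunc z (δ / 2) (by linarith)
    obtain ⟨n, hnM, hns⟩ := choose_n L.length M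
      (∑ i ∈ Finset.range L.length, ‖cc (L.getD i (0, 0))‖) (δ / 2) (by linarith)
    set z' := ∑ i ∈ Finset.range M, lp.single (E := fun _ : ℕ => ℂ) 1 i ((z : ∀ _ : ℕ, ℂ) i)
      with hz'
    set S := ∑ i ∈ Finset.range L.length,
      lp.single (E := fun _ : ℕ => ℂ) 1 (i + n) (dd n i * cc (L.getD i (0, 0))) with hS
    refine ⟨z' + S, ?_, ?_⟩
    · rw [Metric.mem_ball, dist_eq_norm]
      have h6 : z' + S - z = -(z - z') + S := by abel
      rw [h6]
      have h7 : ‖S‖ < δ / 2 := by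
        rw [hS]
        exact (blocknorm n L.length fun i => cc (L.getD i (0, 0))).trans_lt hns
      calc ‖-(z - z') + S‖ ≤ ‖-(z - z')‖ + ‖S‖ := norm_add_le _ _
        _ = ‖z - z'‖ + ‖S‖ := by rw [norm_neg]
        _ < δ / 2 + δ / 2 := add_lt_add hM h7
        _ = δ := by ring
    · refine Set.mem_iUnion.2 ⟨n, ?_⟩
      have hTy : T n (z' + S) = tgt L := by
        rw [map_add, hz', hS, Tzero M n _ hnM,
          Tblock n L.length fun i => cc (L.getD i (0, 0)), zero_add]
      simp only [Set.mem_preimage, hTy, Metric.mem_ball, dist_self]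
      positivity
  -- Baire category
  have hGdense : Dense (⋂ p, U p) := dense_iInter_of_isOpen Uopen Udense
  obtain ⟨y, hy⟩ := hGdense.nonempty
  refine ⟨y, ?_⟩
  rw [Metric.dense_iff]
  intro x r hr
  obtain ⟨L, hL⟩ := tgtdense x (r / 2) (by linarith)
  obtain ⟨j, hj⟩ := exists_nat_one_div_lt (show (0 : ℝ) < r / 2 by linarith)
  have hyU : y ∈ U (L, j) := Set.mem_iInter.1 hy (L, j)
  obtain ⟨n, hn⟩ := Set.mem_iUnion.1 hyU
  rw [Set.mem_preimage, Metric.mem_ball] at hn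
  refine ⟨T n y, ?_, ⟨n, rfl⟩⟩
  rw [Metric.mem_ball]
  calc dist (T n y) x ≤ dist (T n y) (tgt L) + dist (tgt L) x := dist_triangle _ _ _
    _ < 1 / ((j : ℝ) + 1) + r / 2 := add_lt_add hn (by rw [dist_comm, dist_eq_norm]; exact hL)
    _ < r := by linarith
end

section
/- Let X, Y be topological spaces, L : X \times X \to X, N : Y \times Y \to Y, and \phi : Y \to X continuous with dense range such that \phi(N(u,v)) = L(\phi(u),\phi(v)) for all u,v. Define the Grosse-Erdmann–Kim orbit states N^n(x,y) by N^0(x,y)=\{x,y\} and N^n = N^{n-1} \cup \{N(z,w) : z,w \in N^{n-1}\} (similarly for L). Then L^n(\phi(x),\phi(y)) \supseteq \phi(N^n(x,y)) for all n; consequently, if N is bihypercyclic with bihypercyclic vector (x,y), then L is bihypercyclic with vector (\phi(x),\phi(y)). -/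
/-- The Grosse-Erdmann–Kim orbit states of a bilinear map:
`M⁰(x,y) = {x,y}`, `Mⁿ(x,y) = Mⁿ⁻¹(x,y) ∪ {M(z,w) : z,w ∈ Mⁿ⁻¹(x,y)}`. -/
def biStates {X : Type*} (M : X → X → X) (x y : X) : ℕ → Set X
  | 0 => {x, y}
  | n + 1 => biStates M x y n ∪
      {w | ∃ u ∈ biStates M x y n, ∃ v ∈ biStates M x y n, w = M u v}

theorem image_biStates_subset {X Y : Type*} (M : X → X → X) (N : Y → Y → Y) (φ : Y → X)
    (hconj : ∀ u v : Y, φ (N u v) = M (φ u) (φ v)) (x y : Y) (n : ℕ) :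
    φ '' biStates N x y n ⊆ biStates M (φ x) (φ y) n := by
  induction n with
  | zero => exact (Set.image_pair φ x y).subset
  | succ n ih =>
    rintro _ ⟨a, ha | ⟨u, hu, v, hv, rfl⟩, rfl⟩
    · exact Or.inl (ih ⟨a, ha, rfl⟩)
    · exact Or.inr ⟨φ u, ih ⟨u, hu, rfl⟩, φ v, ih ⟨v, hv, rfl⟩, hconj u v⟩

theorem Dense.iUnion_biStates_of_semiconj {X Y : Type*} [TopologicalSpace X]
    [TopologicalSpace Y] {M : X → X → X} {N : Y → Y → Y} {φ : Y → X}
    (hφc : Continuous φ) (hφd : DenseRange φ) (hconj : ∀ u v : Y, φ (N u v) = M (φ u) (φ v))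
    {x y : Y} (hd : Dense (⋃ n : ℕ, biStates N x y n)) :
    Dense (⋃ n : ℕ, biStates M (φ x) (φ y) n) := by
  refine (hφd.dense_image hφc hd).mono ?_
  rw [Set.image_iUnion]
  exact Set.iUnion_mono (image_biStates_subset M N φ hconj x y)

/-- Quasiconjugation transfers bihypercyclicity. -/
theorem stmt_18 {X Y : Type*} [TopologicalSpace X] [TopologicalSpace Y]
    (L : X → X → X) (N : Y → Y → Y) (φ : Y → X)
    (hφc : Continuous φ) (hφd : DenseRange φ)
    (hconj : ∀ u v : Y, φ (N u v) = L (φ u) (φ v)) (x y : Y) :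
    (∀ n : ℕ, φ '' biStates N x y n ⊆ biStates L (φ x) (φ y) n) ∧
    (Dense (⋃ n : ℕ, biStates N x y n) →
      Dense (⋃ n : ℕ, biStates L (φ x) (φ y) n)) :=
  ⟨image_biStates_subset L N φ hconj x y, Dense.iUnion_biStates_of_semiconj hφc hφd hconj⟩
end
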